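/- Consider the parameterized multiobjective linear program with feasible set F(b) = {x ∈ ℝⁿ : ⟨aₜ,x⟩ ≤ bₜ, t = 1,…,m}, Pareto solution set S(b), and Pareto front P(b) = {(⟨c₁,x⟩,…,⟨c_q,x⟩) : x ∈ S(b)}. Assume that for every b with F(b) ≠ ∅ also S(b) ≠ ∅. Then the graph of the epigraphical Pareto front mapping E_P(b) := P(b) + ℝ₊^q, i.e., the set {(b,p) ∈ ℝᵐ × ℝ^q : p ∈ P(b) + ℝ₊^q}, is convex. -/

import Mathlib

/-!
A convex combination of Pareto points for `b₁` and `b₂` is feasible for the combined right-hand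
side, with objective values below the combined front values. So it suffices that every feasible
point `x₀` is dominated by a Pareto point: minimise `∑ⱼ ⟨cⱼ, x⟩` over the feasible `x` dominating
`x₀`. A recession direction decreasing that sum would improve the Pareto point provided by the
hypothesis, so the minimum is attained by the LP existence theorem: a linear functional that is
nonnegative on the recession cone of a nonempty polyhedron attains its minimum there. That
theorem is proved by induction on the set of tight constraints: moving along a descent direction
of the current face until a new constraint becomes tight lands on a smaller face at no higher cost.
-/

/-- The dot product. -/
def dot {n : ℕ} (a x : Fin n → ℝ) : ℝ := ∑ i, a i * x i

/-- Feasibility for the linear system `⟨aₜ, x⟩ ≤ bₜ`, `t = 1,…,m`. -/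
def Feas {n m : ℕ} (a : Fin m → Fin n → ℝ) (b : Fin m → ℝ) (x : Fin n → ℝ) : Prop :=
  ∀ t, dot (a t) x ≤ b t

/-- Pareto-nondominated points of `F(b)` with respect to objectives `c₁,…,c_q`. -/
def Pareto {n m q : ℕ} (a : Fin m → Fin n → ℝ) (b : Fin m → ℝ)
    (c : Fin q → Fin n → ℝ) (x : Fin n → ℝ) : Prop :=
  Feas a b x ∧ ¬ ∃ y, Feas a b y ∧ (∀ j, dot (c j) y ≤ dot (c j) x) ∧
    ∃ j, dot (c j) y < dot (c j) x

section LinearProgramming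

variable {𝕜 V ι : Type*} [Field 𝕜] [LinearOrder 𝕜] [AddCommGroup V] [Module 𝕜 V]

def polyFace (a : ι → Module.Dual 𝕜 V) (b : ι → 𝕜) (E : Finset ι) : Set V :=
  {x | ∀ t, a t x ≤ b t ∧ (t ∈ E → a t x = b t)}

variable {a : ι → Module.Dual 𝕜 V} {b : ι → 𝕜}

lemma polyFace_mono {E E' : Finset ι} (h : E ⊆ E') : polyFace a b E' ⊆ polyFace a b E :=
  fun _ hx t => ⟨(hx t).1, fun ht => (hx t).2 (h ht)⟩

variable [IsStrictOrderedRing 𝕜]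

lemma le_of_mem_polyFace {f : Module.Dual 𝕜 V} {E : Finset ι}
    (hflat : ∀ d, (∀ e ∈ E, a e d = 0) → 0 ≤ f d) {x y : V}
    (hx : x ∈ polyFace a b E) (hy : y ∈ polyFace a b E) : f x ≤ f y := by
  have := hflat (y - x) fun e he => by
    rw [map_sub, (hx e).2 he, (hy e).2 he, sub_self]
  rwa [map_sub, sub_nonneg] at this

lemma exists_add_smul_mem_polyFace_insert [Fintype ι] [DecidableEq ι] {E : Finset ι} {x d : V}
    (hx : x ∈ polyFace a b E) (hdE : ∀ e ∈ E, a e d = 0) (hblock : ∃ t ∉ E, 0 < a t d) :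
    ∃ t ∉ E, ∃ s : 𝕜, 0 ≤ s ∧ x + s • d ∈ polyFace a b (insert t E) := by
  obtain ⟨t, htB, hmin⟩ := (Finset.univ.filter fun t => t ∉ E ∧ 0 < a t d).exists_min_image
    (fun t => (b t - a t x) / a t d) (by simpa [Finset.Nonempty] using hblock)
  simp only [Finset.mem_filter, Finset.mem_univ, true_and] at htB hmin
  obtain ⟨htE, hdt⟩ := htB
  set s := (b t - a t x) / a t d
  have hval : ∀ u, a u (x + s • d) = a u x + s * a u d := fun u => by simp
  refine ⟨t, htE, s, div_nonneg (sub_nonneg.2 (hx t).1) hdt.le, fun u => ?_⟩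
  rw [hval, Finset.mem_insert]
  by_cases huE : u ∈ E
  · simp [hdE u huE, (hx u).2 huE]
  by_cases hut : u = t
  · subst hut
    have : s * a u d = b u - a u x := div_mul_cancel₀ _ hdt.ne'
    constructor <;> [linarith; exact fun _ => by linarith]
  simp only [hut, huE, or_self, IsEmpty.forall_iff, and_true]
  rcases le_or_gt (a u d) 0 with hdu | hdu
  · nlinarith [(hx u).1, div_nonneg (sub_nonneg.2 (hx t).1) hdt.le]
  · have := (le_div_iff₀ hdu).1 (hmin u ⟨huE, hdu⟩)
    linarith

variable [Fintype ι]

theorem exists_isMinOn_polyFace {f : Module.Dual 𝕜 V} (hrec : ∀ d, (∀ t, a t d ≤ 0) → 0 ≤ f d)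
    (E : Finset ι) (hne : (polyFace a b E).Nonempty) :
    ∃ x ∈ polyFace a b E, IsMinOn f (polyFace a b E) x := by
  classical
  obtain ⟨x, hx⟩ := hne
  by_cases hflat : ∀ d, (∀ e ∈ E, a e d = 0) → 0 ≤ f d
  · exact ⟨x, hx, fun y hy => le_of_mem_polyFace hflat hx hy⟩
  push Not at hflat
  obtain ⟨d, hdE, hfd⟩ := hflat
  have hblock : ∃ t ∉ E, 0 < a t d := by
    by_contra! h
    exact (hrec d fun t => if ht : t ∈ E then (hdE t ht).le else h t ht).not_gt hfd
  set S := Finset.univ.filter fun t => t ∉ E ∧ (polyFace a b (insert t E)).Nonempty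
  have hS : ∀ t ∈ S, ∃ z ∈ polyFace a b (insert t E), IsMinOn f (polyFace a b (insert t E)) z :=
    fun t ht => exists_isMinOn_polyFace hrec (insert t E) (Finset.mem_filter.1 ht).2.2
  choose! m hm hmin using hS
  have hreach : ∀ y ∈ polyFace a b E, ∃ t ∈ S, f (m t) ≤ f y := by
    intro y hy
    obtain ⟨t, htE, s, hs, hmem⟩ := exists_add_smul_mem_polyFace_insert hy hdE hblock
    have htS : t ∈ S := Finset.mem_filter.2 ⟨Finset.mem_univ t, htE, _, hmem⟩
    refine ⟨t, htS, (hmin t htS hmem).trans ?_⟩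
    simpa using mul_nonpos_of_nonneg_of_nonpos hs hfd.le
  obtain ⟨t₀, ht₀, -⟩ := hreach x hx
  obtain ⟨t₁, ht₁, hbest⟩ := S.exists_min_image (f ∘ m) ⟨t₀, ht₀⟩
  refine ⟨m t₁, polyFace_mono (Finset.subset_insert t₁ E) (hm t₁ ht₁), fun y hy => ?_⟩
  obtain ⟨t, htS, hty⟩ := hreach y hy
  exact (hbest t htS).trans hty
termination_by Fintype.card ι - E.card
decreasing_by
  classical
  have htE : t ∉ E := (Finset.mem_filter.1 ht).2.1
  have := Finset.card_le_univ (insert t E)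
  rw [Finset.card_insert_of_notMem htE] at this ⊢
  omega

theorem exists_isMinOn_polyhedron {f : Module.Dual 𝕜 V} (hrec : ∀ d, (∀ t, a t d ≤ 0) → 0 ≤ f d)
    (hne : {x | ∀ t, a t x ≤ b t}.Nonempty) :
    ∃ x ∈ {x | ∀ t, a t x ≤ b t}, IsMinOn f {x | ∀ t, a t x ≤ b t} x := by
  have h : polyFace a b ∅ = {x | ∀ t, a t x ≤ b t} := by ext; simp [polyFace]
  rw [← h] at hne ⊢
  exact exists_isMinOn_polyFace hrec ∅ hne

end LinearProgramming

section ParetoFront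

variable {n m q : ℕ} {a : Fin m → Fin n → ℝ} {c : Fin q → Fin n → ℝ}

@[simp] lemma dot_eq_dotProduct (v x : Fin n → ℝ) : dot v x = v ⬝ᵥ x := rfl

lemma Pareto.dot_eq_zero_of_recession {b : Fin m → ℝ} {x d : Fin n → ℝ} (hx : Pareto a b c x)
    (ha : ∀ t, dot (a t) d ≤ 0) (hc : ∀ j, dot (c j) d ≤ 0) (j : Fin q) : dot (c j) d = 0 := by
  refine (hc j).antisymm (not_lt.1 fun hj => hx.2 ⟨x + d, fun t => ?_, fun i => ?_, j, ?_⟩)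
  all_goals simp only [dot_eq_dotProduct, dotProduct_add] at *
  · linarith [show a t ⬝ᵥ x ≤ b t from hx.1 t, ha t]
  · linarith [hc i]
  · linarith

theorem exists_pareto_le (hSne : ∀ b : Fin m → ℝ, (∃ x, Feas a b x) → ∃ x, Pareto a b c x)
    {b : Fin m → ℝ} {x₀ : Fin n → ℝ} (hx₀ : Feas a b x₀) :
    ∃ x, Pareto a b c x ∧ ∀ j, dot (c j) x ≤ dot (c j) x₀ := by
  obtain ⟨xP, hxP⟩ := hSne b ⟨x₀, hx₀⟩
  let A : Fin m ⊕ Fin q → Module.Dual ℝ (Fin n → ℝ) :=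
    Sum.elim (fun t => dotProductBilin ℝ ℝ (a t)) (fun j => dotProductBilin ℝ ℝ (c j))
  let B : Fin m ⊕ Fin q → ℝ := Sum.elim b (fun j => dot (c j) x₀)
  have hAB : ∀ y, (∀ t, A t y ≤ B t) ↔ Feas a b y ∧ ∀ j, dot (c j) y ≤ dot (c j) x₀ := by
    simp [A, B, Feas, Sum.forall]
  have hrec : ∀ d, (∀ t, A t d ≤ 0) → 0 ≤ (∑ j, dotProductBilin ℝ ℝ (c j)) d := by
    intro d hd
    simp only [A, Sum.forall, Sum.elim_inl, Sum.elim_inr] at hd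
    simp [← dot_eq_dotProduct, hxP.dot_eq_zero_of_recession hd.1 hd.2]
  obtain ⟨x, hx, hmin⟩ := exists_isMinOn_polyhedron hrec ⟨x₀, (hAB x₀).2 ⟨hx₀, fun _ => le_rfl⟩⟩
  obtain ⟨hxF, hxle⟩ := (hAB x).1 hx
  refine ⟨x, ⟨hxF, fun ⟨y, hyF, hyle, j, hyj⟩ => ?_⟩, hxle⟩
  have hy := isMinOn_iff.1 hmin y ((hAB y).2 ⟨hyF, fun i => (hyle i).trans (hxle i)⟩)
  simp only [LinearMap.coe_sum, Finset.sum_apply, dotProductBilin_apply_apply] at hy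
  exact hy.not_gt (Finset.sum_lt_sum (fun i _ => hyle i) ⟨j, Finset.mem_univ j, hyj⟩)

lemma dot_add_smul_le {v x₁ x₂ : Fin n → ℝ} {r₁ r₂ θ₁ θ₂ : ℝ} (h₁ : dot v x₁ ≤ r₁)
    (h₂ : dot v x₂ ≤ r₂) (hθ₁ : 0 ≤ θ₁) (hθ₂ : 0 ≤ θ₂) :
    dot v (θ₁ • x₁ + θ₂ • x₂) ≤ θ₁ * r₁ + θ₂ * r₂ := by
  simp only [dot_eq_dotProduct, dotProduct_add, dotProduct_smul, smul_eq_mul] at *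
  gcongr

lemma convex_setOf_exists_feas_dot_le :
    Convex ℝ {bp : (Fin m → ℝ) × (Fin q → ℝ) |
      ∃ x, Feas a bp.1 x ∧ ∀ j, dot (c j) x ≤ bp.2 j} := by
  rintro ⟨b₁, p₁⟩ ⟨x₁, hF₁, hp₁⟩ ⟨b₂, p₂⟩ ⟨x₂, hF₂, hp₂⟩ θ₁ θ₂ hθ₁ hθ₂ -
  exact ⟨θ₁ • x₁ + θ₂ • x₂, fun t => dot_add_smul_le (hF₁ t) (hF₂ t) hθ₁ hθ₂,
    fun j => dot_add_smul_le (hp₁ j) (hp₂ j) hθ₁ hθ₂⟩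

lemma setOf_pareto_add_nonneg_eq
    (hSne : ∀ b : Fin m → ℝ, (∃ x, Feas a b x) → ∃ x, Pareto a b c x) :
    {bp : (Fin m → ℝ) × (Fin q → ℝ) |
      ∃ x u, Pareto a bp.1 c x ∧ (∀ j, 0 ≤ u j) ∧ bp.2 = (fun j => dot (c j) x) + u} =
    {bp | ∃ x, Feas a bp.1 x ∧ ∀ j, dot (c j) x ≤ bp.2 j} := by
  ext ⟨b, p⟩
  constructor
  · rintro ⟨x, u, hx, hu, rfl⟩
    exact ⟨x, hx.1, fun j => le_add_of_nonneg_right (hu j)⟩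
  · rintro ⟨x₀, hx₀, hp⟩
    obtain ⟨x, hx, hle⟩ := exists_pareto_le hSne hx₀
    refine ⟨x, p - fun j => dot (c j) x, hx, fun j => ?_, by abel⟩
    exact sub_nonneg.2 ((hle j).trans (hp j))

end ParetoFront

/-- the graph of the epigraphical Pareto front mapping
`E_P(b) = P(b) + ℝ₊^q` is convex, provided `S(b) ≠ ∅` whenever `F(b) ≠ ∅`. -/
theorem stmt10 {n m q : ℕ} (a : Fin m → Fin n → ℝ) (c : Fin q → Fin n → ℝ)
    (hSne : ∀ b : Fin m → ℝ, (∃ x, Feas a b x) → ∃ x, Pareto a b c x) :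
    Convex ℝ {bp : (Fin m → ℝ) × (Fin q → ℝ) |
      ∃ x u, Pareto a bp.1 c x ∧ (∀ j, 0 ≤ u j) ∧
        bp.2 = (fun j => dot (c j) x) + u} := by
  rw [setOf_pareto_add_nonneg_eq hSne]
  exact convex_setOf_exists_feas_dot_le
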